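/- arXiv:1402.4379 — 4 statements merged into one kernel-verified Lean document; each statement's English description precedes it below -/
import Mathlib

section
/- Let z > 0 and b > 1. If a ≥ 1 then ∫₀^∞ e^{-zt} t^{a-1} (1+t)^{b-a-1} dt ≤ e^z z^{1-b} Γ(b−1), while if 0 < a < 1 then ∫₀^∞ e^{-zt} t^{a-1} (1+t)^{b-a-1} dt ≤ a^{-1} 2^{b-a-1} + 2^{1-a} e^z z^{1-b} Γ(b−1). -/
/-!
Shifting `u = 1 + t` gives `∫₀^∞ e^{-zt} (1+t)^{b-2} dt ≤ e^z ∫₀^∞ e^{-zu} u^{b-2} du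
= e^z z^{1-b} Γ(b-1)`. For `a ≥ 1` the integrand is dominated by `e^{-zt} (1+t)^{b-2}`, as
`t^{a-1} ≤ (1+t)^{a-1}`. For `a < 1` and `b ≤ a + 1`, `(1+t)^{b-a-1} ≤ t^{b-a-1}` bounds the
integral by `z^{1-b} Γ(b-1)` itself. For `a < 1` and `b ≥ a + 1` the integrand is at most
`2^{b-a-1} t^{a-1}` on `(0, 1]`, with integral `2^{b-a-1} / a`, and on `[1, ∞)` the estimate
`t / (1 + t) ≥ 1/2` gives `t^{a-1} ≤ 2^{1-a} (1+t)^{a-1}`.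
-/

open MeasureTheory Set Real

section GammaIntegral

variable {z s : ℝ}

lemma integrableOn_exp_neg_mul_mul_rpow (hz : 0 < z) (hs : 0 < s) :
    IntegrableOn (fun t => exp (-(z * t)) * t ^ (s - 1)) (Ioi 0) := by
  refine (integrableOn_rpow_mul_exp_neg_mul_rpow (p := 1) (s := s - 1) (by linarith) one_pos
    hz).congr_fun (fun t _ => ?_) measurableSet_Ioi
  simp only [rpow_one]
  ring_nf

lemma integral_exp_neg_mul_mul_rpow (hz : 0 < z) (hs : 0 < s) :
    ∫ t in Ioi 0, exp (-(z * t)) * t ^ (s - 1) = z ^ (-s) * Gamma s := by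
  simp_rw [mul_comm (exp _), integral_rpow_mul_exp_neg_mul_Ioi hs hz, one_div, inv_rpow hz.le,
    rpow_neg hz.le]

lemma image_one_add_Ioi_zero : ((1 : ℝ) + ·) '' Ioi 0 = Ioi 1 := by
  rw [image_const_add_Ioi, add_zero]

lemma integrableOn_exp_neg_mul_mul_one_add_rpow (hz : 0 < z) (hs : 0 < s) :
    IntegrableOn (fun t => exp (-(z * t)) * (1 + t) ^ (s - 1)) (Ioi 0) := by
  have h := (integrableOn_exp_neg_mul_mul_rpow hz hs).mono_set (Ioi_subset_Ioi zero_le_one)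
  rw [← image_one_add_Ioi_zero, (measurePreserving_add_left volume (1 : ℝ)).integrableOn_image
      (measurableEmbedding_addLeft 1)] at h
  refine IntegrableOn.congr_fun (h.const_mul (exp z)) (fun t _ => ?_) measurableSet_Ioi
  simp only [Function.comp_apply, ← mul_assoc, ← exp_add]
  ring_nf

lemma integral_exp_neg_mul_mul_one_add_rpow_le (hz : 0 < z) (hs : 0 < s) :
    ∫ t in Ioi 0, exp (-(z * t)) * (1 + t) ^ (s - 1) ≤ exp z * (z ^ (-s) * Gamma s) := by
  have hshift : ∫ t in Ioi 0, exp (-(z * t)) * (1 + t) ^ (s - 1)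
      = exp z * ∫ u in Ioi 1, exp (-(z * u)) * u ^ (s - 1) := by
    rw [← integral_const_mul, ← image_one_add_Ioi_zero,
      (measurePreserving_add_left volume (1 : ℝ)).setIntegral_image_emb
        (measurableEmbedding_addLeft 1)]
    refine setIntegral_congr_fun measurableSet_Ioi (fun t _ => ?_)
    simp only [← mul_assoc, ← exp_add]
    ring_nf
  rw [hshift, ← integral_exp_neg_mul_mul_rpow hz hs]
  gcongr
  · filter_upwards [self_mem_ae_restrict measurableSet_Ioi] with u (hu : 0 < u)
    positivity
  · exact integrableOn_exp_neg_mul_mul_rpow hz hs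
  · exact zero_le_one

end GammaIntegral

lemma integrableOn_Ioc_zero_one_rpow {p : ℝ} (hp : -1 < p) :
    IntegrableOn (fun t : ℝ => t ^ p) (Ioc 0 1) :=
  (intervalIntegrable_iff_integrableOn_Ioc_of_le zero_le_one).1
    (intervalIntegral.intervalIntegrable_rpow' hp)

lemma integral_Ioc_zero_one_rpow {p : ℝ} (hp : -1 < p) :
    ∫ t in Ioc 0 1, t ^ p = (p + 1)⁻¹ := by
  rw [← intervalIntegral.integral_of_le zero_le_one, integral_rpow (Or.inl hp), one_rpow,
    zero_rpow (by linarith), sub_zero, one_div]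

lemma rpow_le_two_rpow_mul_one_add_rpow {t a : ℝ} (ht : 1 ≤ t) (ha : a ≤ 1) :
    t ^ (a - 1) ≤ 2 ^ (1 - a) * (1 + t) ^ (a - 1) := by
  have h1t : 0 < 1 + t := by linarith
  calc t ^ (a - 1) = (t / (1 + t)) ^ (a - 1) * (1 + t) ^ (a - 1) := by
        rw [div_rpow (by linarith) h1t.le, div_mul_cancel₀ _ (rpow_pos_of_pos h1t _).ne']
    _ ≤ (1 / 2) ^ (a - 1) * (1 + t) ^ (a - 1) := by
        gcongr ?_ * _
        exact rpow_le_rpow_of_nonpos one_half_pos (by rw [le_div_iff₀ h1t]; linarith)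
          (by linarith)
    _ = 2 ^ (1 - a) * (1 + t) ^ (a - 1) := by
        rw [one_div, inv_rpow zero_le_two, ← rpow_neg zero_le_two, neg_sub]

lemma exp_neg_mul_mul_rpow_mul_one_add_rpow_le {z t a c : ℝ} (hz : 0 ≤ z) (ht : 0 < t)
    (ht1 : t ≤ 1) (hc : 0 ≤ c) :
    exp (-(z * t)) * t ^ (a - 1) * (1 + t) ^ c ≤ 2 ^ c * t ^ (a - 1) := by
  have hexp : exp (-(z * t)) ≤ 1 := exp_le_one_iff.2 (by nlinarith)
  have hpow : (1 + t) ^ c ≤ 2 ^ c := rpow_le_rpow (by positivity) (by linarith) hc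
  calc exp (-(z * t)) * t ^ (a - 1) * (1 + t) ^ c ≤ 1 * t ^ (a - 1) * 2 ^ c := by gcongr
    _ = 2 ^ c * t ^ (a - 1) := by ring

-- For `0 < a` this is `Γ(a) U(a, b, z)`, with `U` Tricomi's confluent hypergeometric function.
noncomputable def tricomiIntegral (a b z : ℝ) : ℝ :=
  ∫ t in Ioi 0, exp (-(z * t)) * t ^ (a - 1) * (1 + t) ^ (b - a - 1)

section TricomiIntegral

variable {a b z : ℝ}

lemma tricomiIntegral_le_of_one_le (hz : 0 < z) (hb : 1 < b) (ha : 1 ≤ a) :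
    tricomiIntegral a b z ≤ exp z * z ^ (1 - b) * Gamma (b - 1) := by
  have hs : 0 < b - 1 := by linarith
  rw [mul_assoc, ← neg_sub b 1]
  refine (integral_mono_of_nonneg ?_ (integrableOn_exp_neg_mul_mul_one_add_rpow hz hs) ?_).trans
    (integral_exp_neg_mul_mul_one_add_rpow_le hz hs)
  · filter_upwards [self_mem_ae_restrict measurableSet_Ioi] with t (ht : 0 < t)
    positivity
  · filter_upwards [self_mem_ae_restrict measurableSet_Ioi] with t (ht : 0 < t)
    calc exp (-(z * t)) * t ^ (a - 1) * (1 + t) ^ (b - a - 1)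
        ≤ exp (-(z * t)) * (1 + t) ^ (a - 1) * (1 + t) ^ (b - a - 1) := by
          gcongr
          linarith
      _ = exp (-(z * t)) * (1 + t) ^ (b - 1 - 1) := by
          rw [mul_assoc, ← rpow_add (by linarith)]
          ring_nf

lemma tricomiIntegral_le_of_le_add_one (hz : 0 < z) (hb : 1 < b) (hab : b ≤ a + 1) :
    tricomiIntegral a b z ≤ z ^ (1 - b) * Gamma (b - 1) := by
  have hs : 0 < b - 1 := by linarith
  rw [← neg_sub b 1, ← integral_exp_neg_mul_mul_rpow hz hs]
  refine integral_mono_of_nonneg ?_ (integrableOn_exp_neg_mul_mul_rpow hz hs) ?_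
  · filter_upwards [self_mem_ae_restrict measurableSet_Ioi] with t (ht : 0 < t)
    positivity
  · filter_upwards [self_mem_ae_restrict measurableSet_Ioi] with t (ht : 0 < t)
    calc exp (-(z * t)) * t ^ (a - 1) * (1 + t) ^ (b - a - 1)
        ≤ exp (-(z * t)) * t ^ (a - 1) * t ^ (b - a - 1) := by
          gcongr ?_ * ?_
          exact rpow_le_rpow_of_nonpos ht (by linarith) (by linarith)
      _ = exp (-(z * t)) * t ^ (b - 1 - 1) := by
          rw [mul_assoc, ← rpow_add ht]
          ring_nf

lemma tricomiIntegral_le_of_add_one_le (hz : 0 < z) (ha0 : 0 < a) (ha1 : a ≤ 1)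
    (hab : a + 1 ≤ b) :
    tricomiIntegral a b z ≤
      a⁻¹ * 2 ^ (b - a - 1) + 2 ^ (1 - a) * exp z * z ^ (1 - b) * Gamma (b - 1) := by
  have hs : 0 < b - 1 := by linarith
  set near : ℝ → ℝ := (Ioc 0 1).indicator fun t => 2 ^ (b - a - 1) * t ^ (a - 1)
  set far : ℝ → ℝ := fun t => 2 ^ (1 - a) * (exp (-(z * t)) * (1 + t) ^ (b - 1 - 1))
  have hnear : IntegrableOn near (Ioi 0) :=
    (IntegrableOn.integrable_indicator ((integrableOn_Ioc_zero_one_rpow (by linarith)).const_mul _)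
      measurableSet_Ioc).integrableOn
  have hfar : IntegrableOn far (Ioi 0) :=
    (integrableOn_exp_neg_mul_mul_one_add_rpow hz hs).const_mul _
  have hle : tricomiIntegral a b z ≤ ∫ t in Ioi 0, near t + far t := by
    refine integral_mono_of_nonneg ?_ (hnear.add hfar) ?_
    · filter_upwards [self_mem_ae_restrict measurableSet_Ioi] with t (ht : 0 < t)
      positivity
    · filter_upwards [self_mem_ae_restrict measurableSet_Ioi] with t (ht : 0 < t)
      rcases le_or_gt t 1 with ht1 | ht1
      · have hnear_t : near t = 2 ^ (b - a - 1) * t ^ (a - 1) :=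
          indicator_of_mem (show t ∈ Ioc 0 1 from ⟨ht, ht1⟩) _
        rw [hnear_t]
        exact (exp_neg_mul_mul_rpow_mul_one_add_rpow_le hz.le ht ht1 (by linarith)).trans
          (le_add_of_nonneg_right (by positivity))
      · have hnear_t : near t = 0 := indicator_of_notMem (fun h => ht1.not_ge h.2) _
        calc exp (-(z * t)) * t ^ (a - 1) * (1 + t) ^ (b - a - 1)
            ≤ exp (-(z * t)) * (2 ^ (1 - a) * (1 + t) ^ (a - 1)) * (1 + t) ^ (b - a - 1) := by
              gcongr
              exact rpow_le_two_rpow_mul_one_add_rpow ht1.le ha1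
          _ = 2 ^ (1 - a) * (exp (-(z * t)) * (1 + t) ^ (b - 1 - 1)) := by
              rw [show b - 1 - 1 = (a - 1) + (b - a - 1) by ring, rpow_add (by linarith)]
              ring
          _ = near t + far t := by rw [hnear_t, zero_add]
  have hnear_eq : ∫ t in Ioi 0, near t = a⁻¹ * 2 ^ (b - a - 1) := by
    rw [setIntegral_indicator measurableSet_Ioc, inter_eq_right.2 Ioc_subset_Ioi_self,
      integral_const_mul, integral_Ioc_zero_one_rpow (by linarith), sub_add_cancel, mul_comm]
  have hfar_le : ∫ t in Ioi 0, far t ≤ 2 ^ (1 - a) * exp z * z ^ (1 - b) * Gamma (b - 1) := by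
    rw [integral_const_mul, mul_assoc, mul_assoc, ← neg_sub b 1]
    gcongr
    exact integral_exp_neg_mul_mul_one_add_rpow_le hz hs
  rw [integral_add hnear hfar, hnear_eq] at hle
  linarith

end TricomiIntegral

theorem stmt2 (z b : ℝ) (hz : 0 < z) (hb : 1 < b) :
    (∀ a : ℝ, 1 ≤ a →
      (∫ t in Set.Ioi (0:ℝ), Real.exp (-(z*t)) * t ^ (a-1) * (1+t) ^ (b-a-1)) ≤
        Real.exp z * z ^ (1-b) * Real.Gamma (b-1)) ∧
    (∀ a : ℝ, 0 < a → a < 1 →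
      (∫ t in Set.Ioi (0:ℝ), Real.exp (-(z*t)) * t ^ (a-1) * (1+t) ^ (b-a-1)) ≤
        a⁻¹ * (2:ℝ) ^ (b-a-1) + (2:ℝ) ^ (1-a) * Real.exp z * z ^ (1-b) * Real.Gamma (b-1)) := by
  refine ⟨fun a ha => tricomiIntegral_le_of_one_le hz hb ha, fun a ha0 ha1 => ?_⟩
  rcases le_or_gt (a + 1) b with hab | hab
  · exact tricomiIntegral_le_of_add_one_le hz ha0 ha1.le hab
  · have hGamma : 0 ≤ z ^ (1 - b) * Gamma (b - 1) := by
      have := Gamma_pos_of_pos (show 0 < b - 1 by linarith)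
      positivity
    have hconst : 1 ≤ 2 ^ (1 - a) * exp z :=
      one_le_mul_of_one_le_of_one_le (one_le_rpow one_le_two (by linarith)) (one_le_exp hz.le)
    calc tricomiIntegral a b z ≤ z ^ (1 - b) * Gamma (b - 1) :=
          tricomiIntegral_le_of_le_add_one hz hb hab.le
      _ ≤ 2 ^ (1 - a) * exp z * (z ^ (1 - b) * Gamma (b - 1)) :=
          le_mul_of_one_le_left hGamma hconst
      _ ≤ a⁻¹ * 2 ^ (b - a - 1) + 2 ^ (1 - a) * exp z * z ^ (1 - b) * Gamma (b - 1) := by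
          rw [← mul_assoc]
          exact le_add_of_nonneg_left (by positivity)
end

section
/- Let a > 0 and b > 0. The function F : (0,∞) → ℝ defined by F(z) = ∫₀^∞ e^{-zt} t^{a-1} (1+t)^{b-a-1} dt is differentiable on (0,∞) and satisfies |F'(z)| ≤ Γ(b) e^z z^{-b} for every z > 0. -/
/-!
Differentiating under the integral sign, with the derivative dominated by `e^{-zt/2} t^a (1+t)^{b-a-1}`
near `z`, gives `F'(z) = -∫₀^∞ e^{-zt} t^a (1+t)^{b-a-1} dt`. Since `t^a ≤ (1+t)^a`,
`|F'(z)| ≤ ∫₀^∞ e^{-zt} (1+t)^{b-1} dt = e^z ∫₁^∞ e^{-zs} s^{b-1} ds ≤ e^z Γ(b) z^{-b}`.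
-/

open scoped Real

open MeasureTheory Set Real

lemma setIntegral_Ioi_comp_const_add (g : ℝ → ℝ) (c a : ℝ) :
    ∫ t in Ioi a, g (c + t) = ∫ s in Ioi (c + a), g s := by
  rw [← (measurePreserving_add_left volume c).setIntegral_image_emb
    (measurableEmbedding_addLeft c), image_const_add_Ioi]

lemma one_add_rpow_le_two_rpow_mul {t c : ℝ} (ht : 0 ≤ t) (hc : 0 ≤ c) :
    (1 + t) ^ c ≤ 2 ^ c * (1 + t ^ c) := by
  have h2c : (1 : ℝ) ≤ 2 ^ c := one_le_rpow (by norm_num) hc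
  have htc : 0 ≤ t ^ c := rpow_nonneg ht c
  rcases le_total t 1 with ht1 | ht1
  · have : (1 + t) ^ c ≤ 2 ^ c := rpow_le_rpow (by linarith) (by linarith) hc
    nlinarith
  · have : (1 + t) ^ c ≤ 2 ^ c * t ^ c := by
      rw [← mul_rpow zero_le_two ht]
      exact rpow_le_rpow (by linarith) (by linarith) hc
    nlinarith

lemma rpow_mul_one_add_rpow_le {t a : ℝ} (ht : 0 ≤ t) (ha : 0 ≤ a) (q : ℝ) :
    t ^ a * (1 + t) ^ q ≤ (1 + t) ^ (a + q) := by
  rw [rpow_add (by linarith)]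
  gcongr
  linarith

lemma integrableOn_exp_neg_mul_rpow {z p : ℝ} (hz : 0 < z) (hp : -1 < p) :
    IntegrableOn (fun t => exp (-(z * t)) * t ^ p) (Ioi 0) := by
  refine (integrableOn_rpow_mul_exp_neg_mul_rpow hp one_pos hz).congr_fun
    (fun t _ => ?_) measurableSet_Ioi
  dsimp only
  rw [rpow_one, neg_mul, mul_comm]

lemma integrableOn_exp_neg_mul_rpow_mul_one_add_rpow {z p : ℝ} (hz : 0 < z) (hp : -1 < p)
    (q : ℝ) : IntegrableOn (fun t => exp (-(z * t)) * (t ^ p * (1 + t) ^ q)) (Ioi 0) := by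
  set c := max q 0
  have hdom : IntegrableOn
      (fun t => 2 ^ c * (exp (-(z * t)) * t ^ p + exp (-(z * t)) * t ^ (p + c))) (Ioi 0) :=
    ((integrableOn_exp_neg_mul_rpow hz hp).add
      (integrableOn_exp_neg_mul_rpow hz (by linarith [le_max_right q 0]))).const_mul _
  refine hdom.mono' (by fun_prop) ?_
  filter_upwards [ae_restrict_mem measurableSet_Ioi] with t (ht : 0 < t)
  rw [norm_of_nonneg (by positivity)]
  calc exp (-(z * t)) * (t ^ p * (1 + t) ^ q)
      ≤ exp (-(z * t)) * (t ^ p * (2 ^ c * (1 + t ^ c))) := by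
        gcongr
        exact (rpow_le_rpow_of_exponent_le (by linarith) (le_max_left q 0)).trans
          (one_add_rpow_le_two_rpow_mul ht.le (le_max_right q 0))
    _ = 2 ^ c * (exp (-(z * t)) * t ^ p + exp (-(z * t)) * t ^ (p + c)) := by
        rw [rpow_add ht]
        ring

lemma integral_exp_neg_mul_one_add_rpow_le {z b : ℝ} (hz : 0 < z) (hb : 0 < b) :
    ∫ t in Ioi 0, exp (-(z * t)) * (1 + t) ^ (b - 1) ≤ Gamma b * exp z * z ^ (-b) := by
  have hGamma : IntegrableOn (fun s => s ^ (b - 1) * exp (-(z * s))) (Ioi 0) := by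
    simpa only [mul_comm] using integrableOn_exp_neg_mul_rpow hz (by linarith : -1 < b - 1)
  have hshift : ∀ t, exp (-(z * t)) * (1 + t) ^ (b - 1)
      = exp z * ((1 + t) ^ (b - 1) * exp (-(z * (1 + t)))) := fun t => by
    rw [mul_left_comm, ← exp_add]
    ring_nf
  calc ∫ t in Ioi 0, exp (-(z * t)) * (1 + t) ^ (b - 1)
      = exp z * ∫ s in Ioi 1, s ^ (b - 1) * exp (-(z * s)) := by
        simp_rw [hshift, integral_const_mul,
          setIntegral_Ioi_comp_const_add (fun s => s ^ (b - 1) * exp (-(z * s))), add_zero]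
    _ ≤ exp z * ∫ s in Ioi 0, s ^ (b - 1) * exp (-(z * s)) := by
        refine mul_le_mul_of_nonneg_left (setIntegral_mono_set hGamma ?_
          (.of_forall (Ioi_subset_Ioi zero_le_one))) (exp_pos z).le
        filter_upwards [ae_restrict_mem measurableSet_Ioi] with s (hs : 0 < s)
        positivity
    _ = Gamma b * exp z * z ^ (-b) := by
        rw [integral_rpow_mul_exp_neg_mul_Ioi hb hz, one_div, inv_rpow hz.le, ← rpow_neg hz.le]
        ring

theorem hasDerivAt_integral_exp_neg_mul {f : ℝ → ℝ}
    (hf : AEStronglyMeasurable f (volume.restrict (Ioi 0))) {c z : ℝ} (hcz : c < z)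
    (hfz : IntegrableOn (fun t => exp (-(z * t)) * f t) (Ioi 0))
    (hfc : IntegrableOn (fun t => exp (-(c * t)) * (t * f t)) (Ioi 0)) :
    HasDerivAt (fun w => ∫ t in Ioi 0, exp (-(w * t)) * f t)
      (∫ t in Ioi 0, exp (-(z * t)) * (-t * f t)) z := by
  have hmeas : ∀ w : ℝ, AEStronglyMeasurable (fun t => exp (-(w * t)) * f t)
      (volume.restrict (Ioi 0)) := fun w =>
    (by fun_prop : Continuous fun t => exp (-(w * t))).aestronglyMeasurable.mul hf
  have hmeas' : AEStronglyMeasurable (fun t => exp (-(z * t)) * (-t * f t))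
      (volume.restrict (Ioi 0)) :=
    (by fun_prop : Continuous fun t => exp (-(z * t))).aestronglyMeasurable.mul
      ((by fun_prop : Continuous fun t : ℝ => -t).aestronglyMeasurable.mul hf)
  refine (hasDerivAt_integral_of_dominated_loc_of_deriv_le
    (Metric.ball_mem_nhds z (sub_pos.2 hcz)) (.of_forall hmeas) hfz hmeas'
    (F' := fun w t => exp (-(w * t)) * (-t * f t))
    (bound := fun t => ‖exp (-(c * t)) * (t * f t)‖) ?_ hfc.norm ?_).2
  · filter_upwards [ae_restrict_mem measurableSet_Ioi] with t (ht : 0 < t) w hw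
    have hcw : c < w := by
      rw [Metric.mem_ball, Real.dist_eq, abs_sub_lt_iff] at hw
      linarith
    simp only [Real.norm_eq_abs, abs_mul, abs_neg, abs_exp]
    gcongr
  · refine .of_forall fun t w _ => ?_
    have hexp : HasDerivAt (fun w => exp (-(w * t))) (exp (-(w * t)) * -t) w :=
      (hasDerivAt_mul_const t).neg.exp
    simpa only [mul_assoc] using hexp.mul_const (f t)

theorem stmt3 (a b : ℝ) (ha : 0 < a) (hb : 0 < b) :
    ∀ z : ℝ, 0 < z →
      DifferentiableAt ℝ
        (fun w : ℝ => ∫ t in Set.Ioi (0:ℝ), Real.exp (-(w*t)) * t ^ (a-1) * (1+t) ^ (b-a-1)) z ∧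
      |deriv (fun w : ℝ =>
          ∫ t in Set.Ioi (0:ℝ), Real.exp (-(w*t)) * t ^ (a-1) * (1+t) ^ (b-a-1)) z| ≤
        Real.Gamma b * Real.exp z * z ^ (-b) := by
  intro z hz
  set f : ℝ → ℝ := fun t => t ^ (a - 1) * (1 + t) ^ (b - a - 1)
  have hmul : ∀ t ∈ Ioi (0 : ℝ), t * f t = t ^ a * (1 + t) ^ (b - a - 1) := fun t ht => by
    rw [← mul_assoc, ← rpow_one_add' (le_of_lt ht) (by linarith), add_sub_cancel]
  have hderiv := hasDerivAt_integral_exp_neg_mul (f := f) (c := z / 2) (by fun_prop)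
    (by linarith) (integrableOn_exp_neg_mul_rpow_mul_one_add_rpow hz (by linarith) _)
    ((integrableOn_exp_neg_mul_rpow_mul_one_add_rpow (p := a) (half_pos hz) (by linarith)
      (b - a - 1)).congr_fun (fun t ht => by rw [hmul t ht]) measurableSet_Ioi)
  have hF : (fun w => ∫ t in Ioi 0, exp (-(w * t)) * t ^ (a - 1) * (1 + t) ^ (b - a - 1))
      = fun w => ∫ t in Ioi 0, exp (-(w * t)) * f t := by
    simp only [f, mul_assoc]
  have hbound : IntegrableOn (fun t => exp (-(z * t)) * (1 + t) ^ (b - 1)) (Ioi 0) := by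
    simpa only [rpow_zero, one_mul] using
      integrableOn_exp_neg_mul_rpow_mul_one_add_rpow (p := 0) hz (by norm_num) (b - 1)
  rw [hF]
  refine ⟨hderiv.differentiableAt, ?_⟩
  rw [hderiv.deriv, ← norm_eq_abs]
  refine (norm_integral_le_of_norm_le hbound ?_).trans
    (integral_exp_neg_mul_one_add_rpow_le hz hb)
  filter_upwards [ae_restrict_mem measurableSet_Ioi] with t (ht : 0 < t)
  rw [neg_mul, mul_neg, norm_neg, hmul t ht, norm_of_nonneg (by positivity)]
  gcongr
  exact (rpow_mul_one_add_rpow_le ht.le ha.le _).trans_eq (by congr 1; ring)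
end

section
/- Fix z > 0 and a real α ≠ 0, and let λ ∈ ℝ satisfy λ ≤ (3/4)α²; set κ = √(α² − λ). Then for every m ∈ ℤ and every j ∈ {0,1} one has |M(1/2 + j + |m| + mα/κ, 1 + j + 2|m|, z)| ≤ e^{2z}. -/
open scoped Real

noncomputable section

/-- The Pochhammer symbol `(a)ₙ = a (a+1) ⋯ (a+n−1)`. -/
noncomputable def poch (a : ℝ) (n : ℕ) : ℝ := ∏ k ∈ Finset.range n, (a + k)

/-- The Kummer confluent hypergeometric function `M(a,b,z)`. -/
noncomputable def kummerM (a b z : ℝ) : ℝ :=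
  ∑' n : ℕ, (poch a n / poch b n) * z ^ n / (n.factorial : ℝ)

/-!
Each factor of `(a)ₙ` is at most twice the corresponding factor of `(b)ₙ`, so the `n`-th term of
the series is dominated by `(2z)ⁿ / n!`, whose sum is `e^{2z}`. The comparison `|a + k| ≤ 2 (b + k)`
holds because `κ ≥ |α| / 2` when `λ ≤ (3/4) α²`, so the shift `m α / κ` has size at most `2 |m|`.
-/

lemma poch_pos {b : ℝ} (hb : 0 < b) (n : ℕ) : 0 < poch b n :=
  Finset.prod_pos fun _ _ => by positivity

lemma abs_poch_le {a b c : ℝ} (hab : ∀ k : ℕ, |a + k| ≤ c * (b + k)) (n : ℕ) :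
    |poch a n| ≤ c ^ n * poch b n := by
  calc |poch a n| = ∏ k ∈ Finset.range n, |a + k| := Finset.abs_prod _ _
    _ ≤ ∏ k ∈ Finset.range n, c * (b + k) :=
        Finset.prod_le_prod (fun _ _ => abs_nonneg _) fun k _ => hab k
    _ = c ^ n * poch b n := by
        rw [Finset.prod_mul_distrib, Finset.prod_const, Finset.card_range, poch]

lemma abs_kummerM_term_le {a b c : ℝ} (hb : 0 < b) (hab : ∀ k : ℕ, |a + k| ≤ c * (b + k))
    (z : ℝ) (n : ℕ) :
    |poch a n / poch b n * z ^ n / n.factorial| ≤ (c * |z|) ^ n / n.factorial := by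
  have hpb := poch_pos hb n
  rw [abs_div, abs_mul, abs_div, abs_of_pos hpb, abs_pow, Nat.abs_cast, mul_pow]
  have hratio : |poch a n| / poch b n ≤ c ^ n := (div_le_iff₀ hpb).mpr (abs_poch_le hab n)
  gcongr

lemma abs_kummerM_le_exp {a b c : ℝ} (hb : 0 < b) (hab : ∀ k : ℕ, |a + k| ≤ c * (b + k))
    (z : ℝ) : |kummerM a b z| ≤ Real.exp (c * |z|) := by
  have hexp : HasSum (fun n : ℕ => (c * |z|) ^ n / n.factorial) (Real.exp (c * |z|)) := by
    rw [Real.exp_eq_exp_ℝ]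
    exact NormedSpace.expSeries_div_hasSum_exp (c * |z|)
  exact tsum_of_norm_bounded hexp fun n =>
    (Real.norm_eq_abs _).trans_le (abs_kummerM_term_le hb hab z n)

lemma abs_div_sqrt_sub_le_two {α lam : ℝ} (hlam : lam ≤ 3/4 * α^2) :
    |α / √(α^2 - lam)| ≤ 2 := by
  have hhalf : |α / 2| ≤ √(α^2 - lam) := Real.abs_le_sqrt (by linarith)
  rw [abs_div, abs_of_nonneg (Real.sqrt_nonneg _)]
  refine div_le_of_le_mul₀ (Real.sqrt_nonneg _) zero_le_two ?_
  rw [abs_div, abs_two] at hhalf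
  linarith

theorem stmt4_general (z α lam : ℝ) (hz : 0 < z) (hlam : lam ≤ 3/4 * α^2) :
    ∀ m : ℤ, ∀ j : ℕ, j ≤ 1 →
      |kummerM (1/2 + (j:ℝ) + (m.natAbs:ℝ) + (m:ℝ) * α / Real.sqrt (α^2 - lam))
          (1 + (j:ℝ) + 2 * (m.natAbs:ℝ)) z| ≤ Real.exp (2*z) := by
  intro m j _
  have hshift : |(m:ℝ) * α / √(α^2 - lam)| ≤ 2 * m.natAbs := by
    rw [mul_div_assoc, abs_mul, Nat.cast_natAbs, Int.cast_abs, mul_comm (2:ℝ)]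
    exact mul_le_mul_of_nonneg_left (abs_div_sqrt_sub_le_two hlam) (abs_nonneg _)
  have hfactor : ∀ k : ℕ, |1/2 + (j:ℝ) + m.natAbs + m * α / √(α^2 - lam) + k|
      ≤ 2 * (1 + j + 2 * m.natAbs + k) := fun k => by
    rw [abs_le]
    constructor <;> linarith [abs_le.mp hshift, (Nat.cast_nonneg m.natAbs : (0:ℝ) ≤ _),
      (Nat.cast_nonneg j : (0:ℝ) ≤ _), (Nat.cast_nonneg k : (0:ℝ) ≤ _)]
  simpa only [abs_of_pos hz] using abs_kummerM_le_exp (by positivity) hfactor z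

theorem stmt4 (z α lam : ℝ) (hz : 0 < z) (hα : α ≠ 0) (hlam : lam ≤ 3/4 * α^2) :
    ∀ m : ℤ, ∀ j : ℕ, j ≤ 1 →
      |kummerM (1/2 + (j:ℝ) + (m.natAbs:ℝ) + (m:ℝ) * α / Real.sqrt (α^2 - lam))
          (1 + (j:ℝ) + 2 * (m.natAbs:ℝ)) z| ≤ Real.exp (2*z) :=
  stmt4_general z α lam hz hlam
end
end

section
/- Fix α > 0. Then for every m ∈ ℤ and every r ∈ (0,1] one has |v_m(r)| ≤ e^{αr} (2αr)^{|m|}; moreover there exists a constant C_α > 0, independent of m, such that for every m ∈ ℤ with m ≠ 0 and every r ∈ (0,1]: |u_m(r)| ≤ C_α e^{αr} (2αr)^{-|m|} Γ(2|m|). -/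
open scoped Real

noncomputable section

/-- Tricomi's confluent hypergeometric function `U(a,b,z)` for `a > 0`, `z > 0`,
via its integral representation. -/
noncomputable def tricomiU (a b z : ℝ) : ℝ :=
  (Real.Gamma a)⁻¹ * ∫ t in Set.Ioi (0:ℝ), Real.exp (-(z*t)) * t ^ (a-1) * (1+t) ^ (b-a-1)

/-- `v_m(r) = e^{-αr} (2αr)^{|m|} M(1/2+|m|+m, 1+2|m|, 2αr)`. -/
noncomputable def vm (α : ℝ) (m : ℤ) (r : ℝ) : ℝ :=
  Real.exp (-(α*r)) * (2*α*r) ^ (m.natAbs) *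
    kummerM (1/2 + (m.natAbs : ℝ) + (m : ℝ)) (1 + 2*(m.natAbs:ℝ)) (2*α*r)

/-- `u_m(r) = e^{-αr} (2αr)^{|m|} U(1/2+|m|+m, 1+2|m|, 2αr)`. -/
noncomputable def um (α : ℝ) (m : ℤ) (r : ℝ) : ℝ :=
  Real.exp (-(α*r)) * (2*α*r) ^ (m.natAbs) *
    tricomiU (1/2 + (m.natAbs : ℝ) + (m : ℝ)) (1 + 2*(m.natAbs:ℝ)) (2*α*r)

/-!
For `0 ≤ a ≤ b` the coefficients `(a)ₙ/(b)ₙ` of `M(a,b,z)` lie in `[0,1]`, so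
`0 ≤ M(a,b,z) ≤ eᶻ`, which gives the bound on `v_m`.

For `u_m` put `n = |m|` and `z = 2αr ∈ (0, 2α]`. If `m > 0` then `b - a - 1 = -1/2`, and
`(1+t)^{-1/2} ≤ t^{-1/2}` bounds `U` by a Gamma integral: `U ≤ Γ(2n) z^{-2n} / Γ(2n+1/2)`.
If `m < 0` then `a = 1/2`, and `√(1+t) ≤ 1 + √t` bounds the integrand of `U` by
`e^{-zt}(t^{-1/2} + 1)(1+t)^{2n-1}`. Expanding `(1+t)^{2n-1}` binomially gives a sum of Gamma
integrals `∫ e^{-zt} t^{s+k-1} dt`, `s ∈ {1/2, 1}`; since `Γ(s+k) ≤ Γ(s) k!` for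
`0 < s ≤ 1`, each sum is at most
`Γ(s) (2n-1)! z^{-(s+2n-1)} ∑ⱼ zʲ/j! ≤ Γ(s) Γ(2n) eᶻ z^{-(s+2n-1)}`.
Altogether `U ≤ Γ(2n) eᶻ (1 + √z) z^{-2n}`, so `C_α = e^{2α}(1 + √(2α))` works.
-/

open Real MeasureTheory Set Finset
open scoped Nat

section GammaIntegrals

variable {s z : ℝ}

lemma integral_exp_neg_mul_mul_rpow_Ioi (hs : 0 < s) (hz : 0 < z) :
    ∫ t in Ioi (0:ℝ), exp (-(z * t)) * t ^ (s - 1) = Gamma s * z ^ (-s) := by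
  simp_rw [mul_comm (exp _)]
  rw [integral_rpow_mul_exp_neg_mul_Ioi hs hz, one_div, inv_rpow hz.le, ← rpow_neg hz.le,
    mul_comm]

lemma integrableOn_exp_neg_mul_mul_rpow_Ioi (hs : 0 < s) (hz : 0 < z) :
    IntegrableOn (fun t : ℝ => exp (-(z * t)) * t ^ (s - 1)) (Ioi 0) := by
  simpa [rpow_one, neg_mul, mul_comm] using
    integrableOn_rpow_mul_exp_neg_mul_rpow (p := 1) (s := s - 1) (by linarith) one_pos hz

lemma exp_neg_mul_mul_rpow_mul_one_add_pow {t : ℝ} (ht : 0 < t) (K : ℕ) :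
    exp (-(z * t)) * t ^ (s - 1) * (1 + t) ^ K =
      ∑ k ∈ range (K + 1), (K.choose k : ℝ) * (exp (-(z * t)) * t ^ (s + k - 1)) := by
  rw [add_comm (1 : ℝ), add_pow, mul_sum]
  refine sum_congr rfl fun k _ => ?_
  rw [show s + k - 1 = (s - 1) + k by ring, rpow_add ht, rpow_natCast]
  ring

lemma integrableOn_exp_neg_mul_mul_rpow_mul_one_add_pow (hs : 0 < s) (hz : 0 < z) (K : ℕ) :
    IntegrableOn (fun t : ℝ => exp (-(z * t)) * t ^ (s - 1) * (1 + t) ^ K) (Ioi 0) := by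
  refine IntegrableOn.congr_fun ?_
    (fun t ht => (exp_neg_mul_mul_rpow_mul_one_add_pow ht K).symm) measurableSet_Ioi
  refine integrable_finsetSum _ fun k _ => ?_
  exact (integrableOn_exp_neg_mul_mul_rpow_Ioi (by positivity) hz).const_mul _

lemma integral_exp_neg_mul_mul_rpow_mul_one_add_pow (hs : 0 < s) (hz : 0 < z) (K : ℕ) :
    ∫ t in Ioi (0:ℝ), exp (-(z * t)) * t ^ (s - 1) * (1 + t) ^ K =
      ∑ k ∈ range (K + 1), (K.choose k : ℝ) * (Gamma (s + k) * z ^ (-(s + k))) := by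
  rw [setIntegral_congr_fun measurableSet_Ioi
    (fun t ht => exp_neg_mul_mul_rpow_mul_one_add_pow ht K), integral_finsetSum]
  · refine sum_congr rfl fun k _ => ?_
    rw [integral_const_mul, integral_exp_neg_mul_mul_rpow_Ioi (by positivity) hz]
  · exact fun k _ => (integrableOn_exp_neg_mul_mul_rpow_Ioi (by positivity) hz).const_mul _

lemma Gamma_add_nat_le (hs : 0 < s) (hs1 : s ≤ 1) (k : ℕ) :
    Gamma (s + k) ≤ Gamma s * k ! := by
  induction k with
  | zero => simp
  | succ k ih =>
    rw [Nat.cast_succ, ← add_assoc, Gamma_add_one (by positivity), Nat.factorial_succ]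
    push_cast
    calc (s + k) * Gamma (s + k) ≤ (k + 1) * (Gamma s * k !) :=
          mul_le_mul (by linarith) ih (by positivity) (by positivity)
      _ = Gamma s * ((k + 1) * k !) := by ring

lemma sum_choose_mul_factorial_mul_pow_le_exp (hz : 0 ≤ z) (K : ℕ) :
    ∑ k ∈ range (K + 1), (K.choose k : ℝ) * k ! * z ^ (K - k) ≤ K ! * exp z := by
  have hterm : ∀ k ∈ range (K + 1),
      (K.choose k : ℝ) * k ! * z ^ (K - k) = K ! * (z ^ (K - k) / (K - k) !) := by
    intro k hk
    have hfac : (K.choose k : ℝ) * k ! * (K - k) ! = K ! := by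
      exact_mod_cast Nat.choose_mul_factorial_mul_factorial (Nat.lt_succ_iff.mp (mem_range.mp hk))
    field_simp
    linear_combination z ^ (K - k) * hfac
  have hreflect :
      ∑ k ∈ range (K + 1), z ^ (K - k) / (K - k) ! = ∑ j ∈ range (K + 1), z ^ j / j ! := by
    simpa using sum_range_reflect (fun j => z ^ j / j !) (K + 1)
  rw [sum_congr rfl hterm, ← mul_sum, hreflect]
  gcongr
  exact sum_le_exp_of_nonneg hz _

lemma integral_exp_neg_mul_mul_rpow_mul_one_add_pow_le (hs : 0 < s) (hs1 : s ≤ 1) (hz : 0 < z)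
    (K : ℕ) :
    ∫ t in Ioi (0:ℝ), exp (-(z * t)) * t ^ (s - 1) * (1 + t) ^ K ≤
      Gamma s * K ! * exp z * z ^ (-(s + K)) := by
  rw [integral_exp_neg_mul_mul_rpow_mul_one_add_pow hs hz]
  calc ∑ k ∈ range (K + 1), (K.choose k : ℝ) * (Gamma (s + k) * z ^ (-(s + k)))
      ≤ ∑ k ∈ range (K + 1),
          Gamma s * z ^ (-(s + K)) * ((K.choose k : ℝ) * k ! * z ^ (K - k)) := by
        refine sum_le_sum fun k hk => ?_
        have hkK : k ≤ K := Nat.lt_succ_iff.mp (mem_range.mp hk)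
        have hpow : z ^ (-(s + k)) = z ^ (-(s + K)) * z ^ (K - k) := by
          rw [← rpow_natCast, ← rpow_add hz, Nat.cast_sub hkK]
          ring_nf
        rw [hpow]
        have := Gamma_add_nat_le hs hs1 k
        have : 0 ≤ z ^ (-(s + K)) := by positivity
        calc (K.choose k : ℝ) * (Gamma (s + k) * (z ^ (-(s + K)) * z ^ (K - k)))
            ≤ (K.choose k : ℝ) * (Gamma s * k ! * (z ^ (-(s + K)) * z ^ (K - k))) := by gcongr
          _ = _ := by ring
    _ = Gamma s * z ^ (-(s + K)) *
          ∑ k ∈ range (K + 1), (K.choose k : ℝ) * k ! * z ^ (K - k) := by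
        rw [mul_sum]
    _ ≤ Gamma s * z ^ (-(s + K)) * (K ! * exp z) := by
        gcongr
        exact sum_choose_mul_factorial_mul_pow_le_exp hz.le K
    _ = Gamma s * K ! * exp z * z ^ (-(s + K)) := by ring

end GammaIntegrals

section Kummer

variable {a b z : ℝ}

lemma poch_nonneg (ha : 0 ≤ a) (n : ℕ) : 0 ≤ poch a n :=
  prod_nonneg fun _ _ => by positivity

lemma poch_le_poch (ha : 0 ≤ a) (hab : a ≤ b) (n : ℕ) : poch a n ≤ poch b n :=
  prod_le_prod (fun _ _ => by positivity) fun _ _ => by linarith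

lemma kummerM_nonneg (ha : 0 ≤ a) (hab : a ≤ b) (hz : 0 ≤ z) : 0 ≤ kummerM a b z :=
  tsum_nonneg fun n => by
    have := poch_nonneg ha n
    have := poch_nonneg (ha.trans hab) n
    positivity

lemma kummerM_le_exp (ha : 0 ≤ a) (hab : a ≤ b) (hz : 0 ≤ z) : kummerM a b z ≤ exp z := by
  have hratio (n : ℕ) : poch a n / poch b n ≤ 1 :=
    div_le_one_of_le₀ (poch_le_poch ha hab n) (poch_nonneg (ha.trans hab) n)
  refine Real.tsum_le_of_sum_range_le (fun n => ?_) fun N => ?_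
  · have := poch_nonneg ha n
    have := poch_nonneg (ha.trans hab) n
    positivity
  · calc ∑ n ∈ range N, poch a n / poch b n * z ^ n / n !
        ≤ ∑ n ∈ range N, z ^ n / n ! := sum_le_sum fun n _ => by
          rw [mul_div_assoc]
          exact mul_le_of_le_one_left (by positivity) (hratio n)
      _ ≤ exp z := sum_le_exp_of_nonneg hz N

end Kummer

lemma setIntegral_mono_on_of_nonneg {α : Type*} [MeasurableSpace α] {μ : Measure α} {s : Set α}
    {f g : α → ℝ} (hs : MeasurableSet s) (hg : IntegrableOn g s μ)
    (hf : ∀ x ∈ s, 0 ≤ f x) (hfg : ∀ x ∈ s, f x ≤ g x) :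
    ∫ x in s, f x ∂μ ≤ ∫ x in s, g x ∂μ :=
  integral_mono_of_nonneg (ae_restrict_of_forall_mem hs hf) hg (ae_restrict_of_forall_mem hs hfg)

lemma one_add_rpow_one_half_le {t : ℝ} (ht : 0 ≤ t) :
    (1 + t) ^ (1 / 2 : ℝ) ≤ 1 + t ^ (1 / 2 : ℝ) := by
  rw [← sqrt_eq_rpow, ← sqrt_eq_rpow, sqrt_le_left (by positivity)]
  nlinarith [sq_sqrt ht, sqrt_nonneg t]

section Tricomi

variable {a b z : ℝ}

lemma tricomiU_nonneg (ha : 0 ≤ a) : 0 ≤ tricomiU a b z := by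
  refine mul_nonneg (inv_nonneg.mpr (Gamma_nonneg_of_nonneg ha))
    (setIntegral_nonneg measurableSet_Ioi fun t ht => ?_)
  have : 0 < t := ht
  positivity

lemma tricomiU_le_of_le_add_one (hb : 1 < b) (hba : b ≤ a + 1) (hz : 0 < z) :
    tricomiU a b z ≤ Gamma (b - 1) / Gamma a * z ^ (1 - b) := by
  have hintegral : ∫ t in Ioi (0:ℝ), exp (-(z * t)) * t ^ (a - 1) * (1 + t) ^ (b - a - 1) ≤
      ∫ t in Ioi (0:ℝ), exp (-(z * t)) * t ^ ((b - 1) - 1) := by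
    refine setIntegral_mono_on_of_nonneg measurableSet_Ioi
      (integrableOn_exp_neg_mul_mul_rpow_Ioi (by linarith) hz) (fun t (ht : 0 < t) => by positivity)
      fun t (ht : 0 < t) => ?_
    have hdecay : (1 + t) ^ (b - a - 1) ≤ t ^ (b - a - 1) :=
      rpow_le_rpow_of_nonpos ht (by linarith) (by linarith)
    calc exp (-(z * t)) * t ^ (a - 1) * (1 + t) ^ (b - a - 1)
        ≤ exp (-(z * t)) * t ^ (a - 1) * t ^ (b - a - 1) := by gcongr
      _ = exp (-(z * t)) * t ^ ((b - 1) - 1) := by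
        rw [mul_assoc, ← rpow_add ht]
        ring_nf
  rw [integral_exp_neg_mul_mul_rpow_Ioi (by linarith) hz, neg_sub] at hintegral
  calc tricomiU a b z ≤ (Gamma a)⁻¹ * (Gamma (b - 1) * z ^ (1 - b)) :=
        mul_le_mul_of_nonneg_left hintegral (inv_nonneg.mpr (Gamma_nonneg_of_nonneg (by linarith)))
    _ = Gamma (b - 1) / Gamma a * z ^ (1 - b) := by ring

lemma tricomiU_one_half_le (K : ℕ) (hz : 0 < z) :
    tricomiU (1 / 2) (K + 2) z ≤ K ! * exp z * (1 + √z) * z ^ (-(K + 1 : ℝ)) := by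
  have hintegral : ∫ t in Ioi (0:ℝ),
        exp (-(z * t)) * t ^ (1 / 2 - 1 : ℝ) * (1 + t) ^ (K + 2 - 1 / 2 - 1 : ℝ) ≤
      ∫ t in Ioi (0:ℝ), (exp (-(z * t)) * t ^ (1 / 2 - 1 : ℝ) * (1 + t) ^ K +
        exp (-(z * t)) * t ^ (1 - 1 : ℝ) * (1 + t) ^ K) := by
    refine setIntegral_mono_on_of_nonneg measurableSet_Ioi
      ((integrableOn_exp_neg_mul_mul_rpow_mul_one_add_pow (by norm_num) hz K).add
        (integrableOn_exp_neg_mul_mul_rpow_mul_one_add_pow one_pos hz K))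
      (fun t (ht : 0 < t) => by positivity) fun t (ht : 0 < t) => ?_
    have hsplit : (1 + t) ^ (K + 2 - 1 / 2 - 1 : ℝ) = (1 + t) ^ K * (1 + t) ^ (1 / 2 : ℝ) := by
      rw [← rpow_natCast, ← rpow_add (by positivity)]
      ring_nf
    have hhalf : t ^ (1 / 2 - 1 : ℝ) * t ^ (1 / 2 : ℝ) = t ^ (1 - 1 : ℝ) := by
      rw [← rpow_add ht]
      ring_nf
    calc exp (-(z * t)) * t ^ (1 / 2 - 1 : ℝ) * (1 + t) ^ (K + 2 - 1 / 2 - 1 : ℝ)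
        ≤ exp (-(z * t)) * t ^ (1 / 2 - 1 : ℝ) * ((1 + t) ^ K * (1 + t ^ (1 / 2 : ℝ))) := by
          rw [hsplit]
          gcongr
          exact one_add_rpow_one_half_le ht.le
      _ = exp (-(z * t)) * t ^ (1 / 2 - 1 : ℝ) * (1 + t) ^ K +
            exp (-(z * t)) * t ^ (1 - 1 : ℝ) * (1 + t) ^ K := by
          rw [← hhalf]
          ring
  rw [integral_add (integrableOn_exp_neg_mul_mul_rpow_mul_one_add_pow (by norm_num) hz K)
    (integrableOn_exp_neg_mul_mul_rpow_mul_one_add_pow one_pos hz K)] at hintegral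
  have hhalf := integral_exp_neg_mul_mul_rpow_mul_one_add_pow_le (s := 1 / 2) (by norm_num)
    (by norm_num) hz K
  have hone := integral_exp_neg_mul_mul_rpow_mul_one_add_pow_le (s := 1) one_pos le_rfl hz K
  rw [Gamma_one_half_eq] at hhalf
  rw [Gamma_one, one_mul] at hone
  have hpow : z ^ (-(1 / 2 + K : ℝ)) = √z * z ^ (-(K + 1 : ℝ)) := by
    rw [sqrt_eq_rpow, ← rpow_add hz]
    ring_nf
  have hπ : 1 ≤ √π := one_le_sqrt.mpr (by linarith [pi_gt_three])
  unfold tricomiU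
  rw [Gamma_one_half_eq]
  calc (√π)⁻¹ * ∫ t in Ioi (0:ℝ), exp (-(z * t)) * t ^ (1 / 2 - 1 : ℝ) *
        (1 + t) ^ (K + 2 - 1 / 2 - 1 : ℝ)
      ≤ (√π)⁻¹ * (√π * K ! * exp z * z ^ (-(1 / 2 + K : ℝ)) +
          K ! * exp z * z ^ (-(1 + K : ℝ))) := by
        gcongr
        exact hintegral.trans (add_le_add hhalf hone)
    _ = K ! * exp z * ((√π)⁻¹ + √z) * z ^ (-(K + 1 : ℝ)) := by
        rw [hpow, add_comm (1 : ℝ)]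
        field_simp
        ring
    _ ≤ K ! * exp z * (1 + √z) * z ^ (-(K + 1 : ℝ)) := by
        gcongr
        linarith [inv_le_one_of_one_le₀ hπ]

end Tricomi

lemma abs_intCast_eq_natAbs (m : ℤ) : |(m : ℝ)| = m.natAbs := by
  simp [Nat.cast_natAbs]

lemma tricomiU_le_of_ne_zero {m : ℤ} (hm : m ≠ 0) {z : ℝ} (hz : 0 < z) :
    tricomiU (1 / 2 + m.natAbs + m) (1 + 2 * m.natAbs) z ≤
      exp z * (1 + √z) * Gamma (2 * m.natAbs) * z ^ (-(2 * m.natAbs : ℝ)) := by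
  obtain ⟨n, rfl | rfl⟩ := Int.eq_nat_or_neg m
  · have hn : (1 : ℝ) ≤ n := by
      exact_mod_cast Nat.one_le_iff_ne_zero.mpr (by rintro rfl; simp at hm)
    simp only [Int.natAbs_natCast, Int.cast_natCast]
    have hΓa : 1 ≤ Gamma (1 / 2 + n + n) := by
      have := Gamma_strictMonoOn_Ici.monotoneOn (a := 2) (b := 1 / 2 + n + n) (by norm_num)
        (by simp only [Set.mem_Ici]; linarith) (by linarith)
      rwa [Gamma_two] at this
    have hgrowth : 1 ≤ exp z * (1 + √z) :=
      one_le_mul_of_one_le_of_one_le (one_le_exp hz.le) (by linarith [sqrt_nonneg z])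
    calc tricomiU (1 / 2 + n + n) (1 + 2 * n) z
        ≤ Gamma (1 + 2 * n - 1) / Gamma (1 / 2 + n + n) * z ^ (1 - (1 + 2 * n) : ℝ) :=
          tricomiU_le_of_le_add_one (a := 1 / 2 + n + n) (b := 1 + 2 * n) (by linarith)
            (by linarith) hz
      _ ≤ 1 * Gamma (2 * n) * z ^ (-(2 * n : ℝ)) := by
          rw [add_sub_cancel_left, sub_add_cancel_left]
          gcongr
          rw [one_mul]
          exact div_le_self (Gamma_nonneg_of_nonneg (by positivity)) hΓa
      _ ≤ exp z * (1 + √z) * Gamma (2 * n) * z ^ (-(2 * n : ℝ)) := by gcongr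
  · obtain ⟨K, rfl⟩ : ∃ K, n = K + 1 :=
      Nat.exists_eq_succ_of_ne_zero (by rintro rfl; simp at hm)
    simp only [Int.natAbs_neg, Int.natAbs_natCast, Int.cast_neg, Int.cast_natCast,
      add_neg_cancel_right]
    have hb : 1 + 2 * ((K + 1 : ℕ) : ℝ) = (2 * K + 1 : ℕ) + 2 := by push_cast; ring
    have hΓ : 2 * ((K + 1 : ℕ) : ℝ) = (2 * K + 1 : ℕ) + 1 := by push_cast; ring
    rw [hb, hΓ, Gamma_nat_eq_factorial]
    exact (tricomiU_one_half_le (2 * K + 1) hz).trans_eq (by ring)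

lemma abs_vm_le {α r : ℝ} (hα : 0 ≤ α) (hr : 0 ≤ r) (m : ℤ) :
    |vm α m r| ≤ exp (α * r) * (2 * α * r) ^ m.natAbs := by
  obtain ⟨hm_lower, hm_upper⟩ := abs_le.mp (abs_intCast_eq_natAbs m).le
  have ha : 0 ≤ 1 / 2 + (m.natAbs : ℝ) + m := by linarith
  have hab : 1 / 2 + (m.natAbs : ℝ) + m ≤ 1 + 2 * m.natAbs := by linarith
  have hz : 0 ≤ 2 * α * r := by positivity
  unfold vm
  rw [abs_of_nonneg (mul_nonneg (by positivity) (kummerM_nonneg ha hab hz))]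
  calc exp (-(α * r)) * (2 * α * r) ^ m.natAbs * kummerM _ _ (2 * α * r)
      ≤ exp (-(α * r)) * (2 * α * r) ^ m.natAbs * exp (2 * α * r) := by
        gcongr
        exact kummerM_le_exp ha hab hz
    _ = exp (α * r) * (2 * α * r) ^ m.natAbs := by
        rw [mul_right_comm, ← exp_add]
        ring_nf

lemma abs_um_le {α r : ℝ} (hα : 0 < α) {m : ℤ} (hm : m ≠ 0) (hr : 0 < r) (hr1 : r ≤ 1) :
    |um α m r| ≤ exp (2 * α) * (1 + √(2 * α)) * exp (α * r) *
      (2 * α * r) ^ (-(m.natAbs : ℝ)) * Gamma (2 * m.natAbs) := by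
  obtain ⟨hm_lower, -⟩ := abs_le.mp (abs_intCast_eq_natAbs m).le
  have hz : 0 < 2 * α * r := by positivity
  have hzα : 2 * α * r ≤ 2 * α := by nlinarith
  have hpow : (2 * α * r) ^ m.natAbs * (2 * α * r) ^ (-(2 * m.natAbs : ℝ)) =
      (2 * α * r) ^ (-(m.natAbs : ℝ)) := by
    rw [← rpow_natCast, ← rpow_add hz]
    ring_nf
  unfold um
  rw [abs_of_nonneg (mul_nonneg (by positivity) (tricomiU_nonneg (by linarith)))]
  calc exp (-(α * r)) * (2 * α * r) ^ m.natAbs * tricomiU _ _ (2 * α * r)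
      ≤ exp (-(α * r)) * (2 * α * r) ^ m.natAbs * (exp (2 * α * r) * (1 + √(2 * α * r)) *
          Gamma (2 * m.natAbs) * (2 * α * r) ^ (-(2 * m.natAbs : ℝ))) := by
        gcongr
        exact tricomiU_le_of_ne_zero hm hz
    _ = exp (2 * α * r) * (1 + √(2 * α * r)) * exp (-(α * r)) *
          ((2 * α * r) ^ m.natAbs * (2 * α * r) ^ (-(2 * m.natAbs : ℝ))) *
          Gamma (2 * m.natAbs) := by
        ring
    _ ≤ exp (2 * α) * (1 + √(2 * α)) * exp (α * r) *
          ((2 * α * r) ^ m.natAbs * (2 * α * r) ^ (-(2 * m.natAbs : ℝ))) *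
          Gamma (2 * m.natAbs) := by
        gcongr
        linarith [mul_pos hα hr]
    _ = _ := by rw [hpow]

theorem stmt16 (α : ℝ) (hα : 0 < α) :
    (∀ m : ℤ, ∀ r : ℝ, 0 < r → r ≤ 1 →
      |vm α m r| ≤ Real.exp (α*r) * (2*α*r) ^ (m.natAbs)) ∧
    ∃ C : ℝ, 0 < C ∧ ∀ m : ℤ, m ≠ 0 → ∀ r : ℝ, 0 < r → r ≤ 1 →
      |um α m r| ≤ C * Real.exp (α*r) * (2*α*r) ^ (-(m.natAbs:ℝ)) *
        Real.Gamma (2*(m.natAbs:ℝ)) :=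
  ⟨fun m _ hr _ => abs_vm_le hα.le hr.le m,
    exp (2 * α) * (1 + √(2 * α)), by positivity, fun _ hm _ hr hr1 => abs_um_le hα hm hr hr1⟩
end
end
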